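/- Let W ⊆ P(ℕ) be a class of subsets of ℕ that is downward closed under Turing reducibility. Suppose a problem P admits preservation of W but a problem Q does not admit preservation of W. Then there exists a Turing ideal S with S ⊆ W such that P holds in S but Q does not hold in S. -/

import Mathlib

open Classical in
/-- The characteristic function of a set of naturals. -/
noncomputable def chi (A : Set ℕ) : ℕ → ℕ := fun n => if n ∈ A then 1 else 0

/-- The effective join (Turing join) of two sets of naturals:
`X ⊕ Y = {2n : n ∈ X} ∪ {2n+1 : n ∈ Y}`. -/
def setJoin (A B : Set ℕ) : Set ℕ :=
  {n | (∃ m ∈ A, n = 2 * m) ∨ (∃ m ∈ B, n = 2 * m + 1)}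

/-- The graph of a function `f : ℕ → ℕ`, coded as a set of naturals. -/
def funGraph (f : ℕ → ℕ) : Set ℕ := {m | ∃ n, m = Nat.pair n (f n)}

/-- Partial recursiveness relative to an oracle `g : ℕ → ℕ` (oracle computability). -/
inductive RecursiveInFn (g : ℕ → ℕ) : (ℕ →. ℕ) → Prop
  | zero : RecursiveInFn g (pure 0)
  | succ : RecursiveInFn g Nat.succ
  | left : RecursiveInFn g fun n => (Nat.unpair n).1
  | right : RecursiveInFn g fun n => (Nat.unpair n).2
  | oracle : RecursiveInFn g g
  | pair {f h : ℕ →. ℕ} : RecursiveInFn g f → RecursiveInFn g h →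
      RecursiveInFn g fun n => Nat.pair <$> f n <*> h n
  | comp {f h : ℕ →. ℕ} : RecursiveInFn g f → RecursiveInFn g h →
      RecursiveInFn g fun n => h n >>= f
  | prec {f h : ℕ →. ℕ} : RecursiveInFn g f → RecursiveInFn g h →
      RecursiveInFn g (Nat.unpaired fun a n =>
        n.rec (f a) fun y IH => do {let i ← IH; h (Nat.pair a (Nat.pair y i))})
  | rfind {f : ℕ →. ℕ} : RecursiveInFn g f →
      RecursiveInFn g fun a => Nat.rfind fun n => (fun m => m = 0) <$> f (Nat.pair a n)

/-- Turing reducibility between sets of naturals. -/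
noncomputable def TuringRed (A B : Set ℕ) : Prop := RecursiveInFn (chi B) (chi A)

/-- `A` is `Σ⁰₁(Z)` (i.e. `Z`-c.e.): `A` is the domain of a partial `Z`-computable function. -/
noncomputable def SigmaOneIn (Z A : Set ℕ) : Prop :=
  ∃ f : ℕ →. ℕ, RecursiveInFn (chi Z) f ∧ A = f.Dom

/-- `g` dominates `f` if `g n ≥ f n` for every `n`. -/
def Dominates (g f : ℕ → ℕ) : Prop := ∀ n, f n ≤ g n

/-- `f` is `Z`-hyperimmune: no `Z`-computable function dominates `f`. -/
noncomputable def HyperimmuneIn (Z : Set ℕ) (f : ℕ → ℕ) : Prop :=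
  ∀ g : ℕ → ℕ, RecursiveInFn (chi Z) g → ¬ Dominates g f

/-- `A` is `Δ⁰₂(G)`: `A` is limit computable relative to `G`. -/
noncomputable def DeltaTwoIn (G A : Set ℕ) : Prop :=
  ∃ h : ℕ → ℕ, RecursiveInFn (chi G) h ∧ ∀ x, ∃ s₀, ∀ s ≥ s₀, h (Nat.pair x s) = chi A x

/-- `A` is c.e. (`Σ⁰₁`). -/
noncomputable def CESet (A : Set ℕ) : Prop := SigmaOneIn ∅ A

/-- `A` is `Δ⁰₂` (limit computable). -/
noncomputable def DeltaTwo (A : Set ℕ) : Prop := DeltaTwoIn ∅ A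

/-- `A` is `Z`-immune: `A` is infinite and contains no infinite `Z`-computable subset. -/
noncomputable def ImmuneIn (Z A : Set ℕ) : Prop :=
  A.Infinite ∧ ∀ B : Set ℕ, TuringRed B Z → B.Infinite → ¬ B ⊆ A

/-- `A` is `Z`-hyperimmune as a set: its principal function is `Z`-hyperimmune. -/
noncomputable def HyperimmuneSetIn (Z A : Set ℕ) : Prop :=
  A.Infinite ∧ HyperimmuneIn Z (Nat.nth (· ∈ A))

/-- Enumeration reducibility, with finite sets coded by binary representation
(`m ∈ D_u ↔ Nat.testBit u m`). -/
noncomputable def EnumRed (B A : Set ℕ) : Prop :=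
  ∃ W : Set ℕ, CESet W ∧
    ∀ n, n ∈ B ↔ ∃ u, Nat.pair n u ∈ W ∧ ∀ m, Nat.testBit u m = true → m ∈ A

/-- `B` is cototal: `B ≤ₑ ℕ \ B`. -/
noncomputable def Cototal (B : Set ℕ) : Prop := EnumRed B Bᶜ

/-- `X` is semi-computable: there is a computable selector function. -/
noncomputable def SemiComputable (X : Set ℕ) : Prop :=
  ∃ g : ℕ → ℕ, RecursiveInFn (chi ∅) g ∧
    ∀ x y : ℕ, (g (Nat.pair x y) = x ∨ g (Nat.pair x y) = y) ∧
      ((x ∈ X ∨ y ∈ X) → g (Nat.pair x y) ∈ X)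

/-- A problem: a set of instances, and a solution relation between instances and solutions.
Instances and solutions are coded by sets of naturals. -/
structure Problem where
  Inst : Set (Set ℕ)
  Sol : Set ℕ → Set ℕ → Prop

/-- `P` admits preservation of `W`. -/
noncomputable def Preserves (P : Problem) (W : Set (Set ℕ)) : Prop :=
  ∀ Z ∈ W, ∀ X ∈ P.Inst, TuringRed X Z → ∃ Y, P.Sol X Y ∧ setJoin Z Y ∈ W

/-- `P` admits strong preservation of `W`. -/
noncomputable def StronglyPreserves (P : Problem) (W : Set (Set ℕ)) : Prop :=
  ∀ Z ∈ W, ∀ X ∈ P.Inst, ∃ Y, P.Sol X Y ∧ setJoin Z Y ∈ W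

/-- `W` is downward closed under Turing reducibility. -/
noncomputable def DownwardClosed (W : Set (Set ℕ)) : Prop :=
  ∀ X ∈ W, ∀ Y : Set ℕ, TuringRed Y X → Y ∈ W

/-- A Turing ideal: closed under effective join and downward closed under `≤_T`. -/
noncomputable def TuringIdeal (S : Set (Set ℕ)) : Prop :=
  (∀ X ∈ S, ∀ Y ∈ S, setJoin X Y ∈ S) ∧ DownwardClosed S

/-- `P` holds in `S`: every instance of `P` in `S` has a solution in `S`. -/
def HoldsIn (P : Problem) (S : Set (Set ℕ)) : Prop :=
  ∀ X ∈ P.Inst, X ∈ S → ∃ Y, P.Sol X Y ∧ Y ∈ S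

/-- `P` admits avoidance of `k` cones (`k ≤ ω`, with `ω` represented by `⊤ : ℕ∞`). -/
noncomputable def AvoidsCones (P : Problem) (k : ℕ∞) : Prop :=
  ∀ Z : Set ℕ, ∀ B : ℕ → Set ℕ, (∀ s : ℕ, (s : ℕ∞) < k → ¬ TuringRed (B s) Z) →
    ∀ X ∈ P.Inst, TuringRed X Z →
      ∃ Y, P.Sol X Y ∧ ∀ s : ℕ, (s : ℕ∞) < k → ¬ TuringRed (B s) (setJoin Z Y)

/-- `P` admits non-relativized avoidance of `k` cones. -/
noncomputable def NRAvoidsCones (P : Problem) (k : ℕ∞) : Prop :=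
  ∀ B : ℕ → Set ℕ, (∀ s : ℕ, (s : ℕ∞) < k → ¬ TuringRed (B s) ∅) →
    ∀ X ∈ P.Inst, TuringRed X ∅ →
      ∃ Y, P.Sol X Y ∧ ∀ s : ℕ, (s : ℕ∞) < k → ¬ TuringRed (B s) Y

/-- `P` admits preservation of `k` non-`Σ⁰₁` definitions. -/
noncomputable def PreservesNonSigmaOne (P : Problem) (k : ℕ∞) : Prop :=
  ∀ Z : Set ℕ, ∀ B : ℕ → Set ℕ, (∀ s : ℕ, (s : ℕ∞) < k → ¬ SigmaOneIn Z (B s)) →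
    ∀ X ∈ P.Inst, TuringRed X Z →
      ∃ Y, P.Sol X Y ∧ ∀ s : ℕ, (s : ℕ∞) < k → ¬ SigmaOneIn (setJoin Z Y) (B s)

/-- `P` admits preservation of `k` hyperimmunities. -/
noncomputable def PreservesHyperimmunities (P : Problem) (k : ℕ∞) : Prop :=
  ∀ Z : Set ℕ, ∀ f : ℕ → (ℕ → ℕ), (∀ s : ℕ, (s : ℕ∞) < k → HyperimmuneIn Z (f s)) →
    ∀ X ∈ P.Inst, TuringRed X Z →
      ∃ Y, P.Sol X Y ∧ ∀ s : ℕ, (s : ℕ∞) < k → HyperimmuneIn (setJoin Z Y) (f s)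

/-- `P` admits preservation of `k` immunities. -/
noncomputable def PreservesImmunities (P : Problem) (k : ℕ∞) : Prop :=
  ∀ Z : Set ℕ, ∀ B : ℕ → Set ℕ, (∀ s : ℕ, (s : ℕ∞) < k → ImmuneIn Z (B s)) →
    ∀ X ∈ P.Inst, TuringRed X Z →
      ∃ Y, P.Sol X Y ∧ ∀ s : ℕ, (s : ℕ∞) < k → ImmuneIn (setJoin Z Y) (B s)

/-- Coding a point of Cantor space as a function `ℕ → ℕ`. -/
def boolFun (X : ℕ → Bool) : ℕ → ℕ := fun n => cond (X n) 1 0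

/-- `F` is a trace of the closed set `C ⊆ 2^ω`: each `F n` is a set of binary strings of
length `n`, one of which is a prefix of a member of `C`. -/
def IsTrace (C : Set (ℕ → Bool)) (F : ℕ → Finset (List Bool)) : Prop :=
  ∀ n, (∀ σ ∈ F n, σ.length = n) ∧ ∃ σ ∈ F n, ∃ X ∈ C, σ = (List.range n).map X

/-- `C ⊆ 2^ω` has a `Z`-computable constant-bound trace. -/
noncomputable def HasCBTraceIn (Z : Set ℕ) (C : Set (ℕ → Bool)) : Prop :=
  ∃ (F : ℕ → Finset (List Bool)) (k : ℕ), IsTrace C F ∧ (∀ n, (F n).card = k) ∧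
    RecursiveInFn (chi Z) (fun n => Encodable.encode (F n) : ℕ → ℕ)

open Classical in
/-- The real `0.B` with binary expansion given by `B`. -/
noncomputable def realOf (B : Set ℕ) : ℝ :=
  ∑' n : ℕ, if n ∈ B then ((2 : ℝ) ^ (n + 1))⁻¹ else 0

/-- A c.e. set of rationals: the image of a c.e. set of naturals under the
canonical enumeration of `ℚ`. -/
noncomputable def CERatSet (W : Set ℚ) : Prop :=
  ∃ S : Set ℕ, CESet S ∧ W = (fun n => Denumerable.ofNat ℚ n) '' S

/-!
Fix `Z ∈ W` and an instance `X ≤_T Z` of `Q` with no solution `Y` such that `Z ⊕ Y ∈ W`.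
Starting from `Z`, build a chain `Z = Z₀ ≤_T Z₁ ≤_T ⋯` inside `W` in which each step joins a
solution of one instance of `P`, supplied by preservation of `W`. Every lower cone
`{X | X ≤_T Zₙ}` is countable, so a dovetailing enumeration serves every instance below every
`Zₙ`, and `P` holds in the Turing ideal `S` generated by the chain. As `W` is downward closed,
`S ⊆ W`; and `Q` fails in `S`, since a solution `Y ∈ S` of `X` would put `Z ⊕ Y` into `S ⊆ W`.
-/

open Set

namespace Nat.RecursiveIn

/-- The functions having a derivation of height at most `k`. -/
def stage (O : Set (ℕ →. ℕ)) : ℕ → Set (ℕ →. ℕ)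
  | 0 => range ![fun _ => 0, Nat.succ, fun n => (Nat.unpair n).1, fun n => (Nat.unpair n).2] ∪ O
  | k + 1 =>
    stage O k ∪ image2 (fun f h n => Nat.pair <$> f n <*> h n) (stage O k) (stage O k) ∪
      image2 (fun f h n => h n >>= f) (stage O k) (stage O k) ∪
      image2 (fun f h p =>
          let (a, n) := Nat.unpair p
          n.rec (f a) fun y IH => do
            let i ← IH
            h (Nat.pair a (Nat.pair y i))) (stage O k) (stage O k) ∪
      (fun f a => Nat.rfind fun n => (fun m => m = 0) <$> f (Nat.pair a n)) '' stage O k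

variable {O : Set (ℕ →. ℕ)}

theorem stage_mono : Monotone (stage O) :=
  monotone_nat_of_le_succ fun _ => by
    simp only [stage, union_assoc]
    exact subset_union_left

theorem countable_stage (hO : O.Countable) (k : ℕ) : (stage O k).Countable := by
  induction k with
  | zero => exact (countable_range _).union hO
  | succ k ih =>
    exact (((ih.union (ih.image2 ih _)).union (ih.image2 ih _)).union (ih.image2 ih _)).union
      (ih.image _)

theorem exists_mem_stage_and {f g : ℕ →. ℕ} (hf : ∃ k, f ∈ stage O k) (hg : ∃ k, g ∈ stage O k) :
    ∃ k, f ∈ stage O k ∧ g ∈ stage O k :=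
  have ⟨k₁, h₁⟩ := hf
  have ⟨k₂, h₂⟩ := hg
  ⟨max k₁ k₂, stage_mono (le_max_left _ _) h₁, stage_mono (le_max_right _ _) h₂⟩

theorem exists_mem_stage {f : ℕ →. ℕ} (hf : Nat.RecursiveIn O f) : ∃ k, f ∈ stage O k := by
  induction hf with
  | zero => exact ⟨0, Or.inl ⟨0, rfl⟩⟩
  | succ => exact ⟨0, Or.inl ⟨1, rfl⟩⟩
  | left => exact ⟨0, Or.inl ⟨2, rfl⟩⟩
  | right => exact ⟨0, Or.inl ⟨3, rfl⟩⟩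
  | oracle g hg => exact ⟨0, Or.inr hg⟩
  | pair _ _ ih₁ ih₂ =>
    obtain ⟨k, h₁, h₂⟩ := exists_mem_stage_and ih₁ ih₂
    exact ⟨k + 1, Or.inl <| Or.inl <| Or.inl <| Or.inr <| mem_image2_of_mem h₁ h₂⟩
  | comp _ _ ih₁ ih₂ =>
    obtain ⟨k, h₁, h₂⟩ := exists_mem_stage_and ih₁ ih₂
    exact ⟨k + 1, Or.inl <| Or.inl <| Or.inr <| mem_image2_of_mem h₁ h₂⟩
  | prec _ _ ih₁ ih₂ =>
    obtain ⟨k, h₁, h₂⟩ := exists_mem_stage_and ih₁ ih₂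
    exact ⟨k + 1, Or.inl <| Or.inr <| mem_image2_of_mem h₁ h₂⟩
  | rfind _ ih =>
    obtain ⟨k, h⟩ := ih
    exact ⟨k + 1, Or.inr <| mem_image_of_mem _ h⟩

theorem countable_setOf (hO : O.Countable) : {f | Nat.RecursiveIn O f}.Countable :=
  (countable_iUnion (countable_stage hO)).mono fun _ hf => mem_iUnion.2 (exists_mem_stage hf)

theorem comp_total {f u : ℕ → ℕ} (hf : Nat.RecursiveIn O f) (hu : Nat.RecursiveIn O u) :
    Nat.RecursiveIn O fun n => f (u n) :=
  (hf.comp hu).of_eq fun n => Part.bind_some (u n) (f : ℕ →. ℕ)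

theorem pair_total {f g : ℕ → ℕ} (hf : Nat.RecursiveIn O f) (hg : Nat.RecursiveIn O g) :
    Nat.RecursiveIn O fun n => Nat.pair (f n) (g n) :=
  (hf.pair hg).of_eq fun n => by simp [Seq.seq]

theorem of_primrec {f : ℕ → ℕ} (hf : Primrec f) : Nat.RecursiveIn O fun n => f n :=
  Nat.Primrec.recursiveIn (Primrec.nat_iff.1 hf)

end Nat.RecursiveIn

theorem recursiveInFn_iff {g : ℕ → ℕ} {f : ℕ →. ℕ} :
    RecursiveInFn g f ↔ Nat.RecursiveIn {(g : ℕ →. ℕ)} f := by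
  constructor
  · intro h
    induction h with
    | zero => exact .zero
    | succ => exact .succ
    | left => exact .left
    | right => exact .right
    | oracle => exact .oracle _ rfl
    | pair _ _ ih₁ ih₂ => exact .pair ih₁ ih₂
    | comp _ _ ih₁ ih₂ => exact .comp ih₁ ih₂
    | prec _ _ ih₁ ih₂ => exact .prec ih₁ ih₂
    | rfind _ ih => exact .rfind ih
  · intro h
    induction h with
    | zero => exact .zero
    | succ => exact .succ
    | left => exact .left
    | right => exact .right
    | oracle _ hg => rw [hg]; exact .oracle
    | pair _ _ ih₁ ih₂ => exact .pair ih₁ ih₂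
    | comp _ _ ih₁ ih₂ => exact .comp ih₁ ih₂
    | prec _ _ ih₁ ih₂ => exact .prec ih₁ ih₂
    | rfind _ ih => exact .rfind ih

theorem turingRed_iff {A B : Set ℕ} :
    TuringRed A B ↔ Nat.RecursiveIn {(chi B : ℕ →. ℕ)} (chi A) :=
  recursiveInFn_iff

theorem chi_coe_injective : Function.Injective fun A : Set ℕ => (chi A : ℕ →. ℕ) := by
  intro A B h
  ext n
  have := Part.some_injective (congrFun h n)
  by_cases hA : n ∈ A <;> by_cases hB : n ∈ B <;> simp_all [chi]

theorem countable_setOf_turingRed (Z : Set ℕ) : {X | TuringRed X Z}.Countable := by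
  simp only [turingRed_iff]
  exact (Nat.RecursiveIn.countable_setOf (countable_singleton _)).preimage chi_coe_injective

namespace TuringRed

theorem refl (A : Set ℕ) : TuringRed A A := RecursiveInFn.oracle

theorem trans {A B C : Set ℕ} (hAB : TuringRed A B) (hBC : TuringRed B C) : TuringRed A C := by
  rw [turingRed_iff] at *
  exact hAB.subst fun _ hg => hg ▸ hBC

end TuringRed

theorem two_mul_mem_setJoin {A B : Set ℕ} {n : ℕ} : 2 * n ∈ setJoin A B ↔ n ∈ A := by
  simp only [setJoin, mem_ofPred_eq]
  constructor
  · rintro (⟨m, hm, e⟩ | ⟨m, -, e⟩)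
    · rwa [show n = m by omega]
    · omega
  · exact fun h => Or.inl ⟨n, h, rfl⟩

theorem two_mul_add_one_mem_setJoin {A B : Set ℕ} {n : ℕ} : 2 * n + 1 ∈ setJoin A B ↔ n ∈ B := by
  simp only [setJoin, mem_ofPred_eq]
  constructor
  · rintro (⟨m, -, e⟩ | ⟨m, hm, e⟩)
    · omega
    · rwa [show n = m by omega]
  · exact fun h => Or.inr ⟨n, h, rfl⟩

theorem chi_setJoin_two_mul (A B : Set ℕ) (n : ℕ) : chi (setJoin A B) (2 * n) = chi A n := by
  classical exact if_congr two_mul_mem_setJoin rfl rfl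

theorem chi_setJoin_two_mul_add_one (A B : Set ℕ) (n : ℕ) :
    chi (setJoin A B) (2 * n + 1) = chi B n := by
  classical exact if_congr two_mul_add_one_mem_setJoin rfl rfl

theorem turingRed_setJoin_left (A B : Set ℕ) : TuringRed A (setJoin A B) := by
  rw [turingRed_iff]
  exact ((Nat.RecursiveIn.oracle _ (mem_singleton _)).comp_total
    (.of_primrec (Primrec.nat_mul.comp (.const 2) .id))).of_eq fun n => by
      simp [chi_setJoin_two_mul]

theorem turingRed_setJoin_right (A B : Set ℕ) : TuringRed B (setJoin A B) := by
  rw [turingRed_iff]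
  exact ((Nat.RecursiveIn.oracle _ (mem_singleton _)).comp_total
    (.of_primrec (Primrec.succ.comp (Primrec.nat_mul.comp (.const 2) .id)))).of_eq fun n => by
      simp [chi_setJoin_two_mul_add_one]

theorem chi_setJoin (A B : Set ℕ) (n : ℕ) :
    chi (setJoin A B) n = bif n.bodd then chi B n.div2 else chi A n.div2 := by
  rcases Nat.even_or_odd' n with ⟨m, rfl | rfl⟩
  · simp [chi_setJoin_two_mul]
  · simp [chi_setJoin_two_mul_add_one]

theorem setJoin_turingRed {A B C : Set ℕ} (hA : TuringRed A C) (hB : TuringRed B C) :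
    TuringRed (setJoin A B) C := by
  rw [turingRed_iff] at *
  have hdiv2 : Nat.RecursiveIn {(chi C : ℕ →. ℕ)} fun n => n.div2 := .of_primrec Primrec.nat_div2
  have hsel : Primrec fun p : ℕ =>
      bif (Nat.unpair p).2.bodd then (Nat.unpair (Nat.unpair p).1).2
      else (Nat.unpair (Nat.unpair p).1).1 :=
    Primrec.cond (Primrec.nat_bodd.comp (Primrec.snd.comp Primrec.unpair))
      (Primrec.snd.comp (Primrec.unpair.comp (Primrec.fst.comp Primrec.unpair)))
      (Primrec.fst.comp (Primrec.unpair.comp (Primrec.fst.comp Primrec.unpair)))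
  exact ((Nat.RecursiveIn.of_primrec hsel).comp_total
    (((hA.comp_total hdiv2).pair_total (hB.comp_total hdiv2)).pair_total
      (.of_primrec Primrec.id))).of_eq fun n => by
    simp [chi_setJoin]

theorem turingRed_of_le_of_forall_succ {C : ℕ → Set ℕ} (hC : ∀ n, TuringRed (C n) (C (n + 1)))
    {m n : ℕ} (h : m ≤ n) : TuringRed (C m) (C n) := by
  induction h with
  | refl => exact TuringRed.refl _
  | step _ ih => exact ih.trans (hC _)

def chainIdeal (C : ℕ → Set ℕ) : Set (Set ℕ) := {Y | ∃ n, TuringRed Y (C n)}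

theorem turingIdeal_chainIdeal {C : ℕ → Set ℕ} (hC : ∀ n, TuringRed (C n) (C (n + 1))) :
    TuringIdeal (chainIdeal C) := by
  refine ⟨?_, ?_⟩
  · rintro A ⟨m, hA⟩ B ⟨n, hB⟩
    exact ⟨max m n, setJoin_turingRed
      (hA.trans (turingRed_of_le_of_forall_succ hC (le_max_left m n)))
      (hB.trans (turingRed_of_le_of_forall_succ hC (le_max_right m n)))⟩
  · rintro A ⟨n, hA⟩ B hBA
    exact ⟨n, hBA.trans hA⟩

theorem chainIdeal_subset {W : Set (Set ℕ)} (hW : DownwardClosed W) {C : ℕ → Set ℕ}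
    (hC : ∀ n, C n ∈ W) : chainIdeal C ⊆ W :=
  fun _ ⟨n, hY⟩ => hW _ (hC n) _ hY

theorem not_holdsIn_of_forall_setJoin_not_mem {Q : Problem} {W S : Set (Set ℕ)} (hSW : S ⊆ W)
    (hS : TuringIdeal S) {Z X : Set ℕ} (hZ : Z ∈ S) (hX : X ∈ Q.Inst) (hXZ : TuringRed X Z)
    (hno : ∀ Y, Q.Sol X Y → setJoin Z Y ∉ W) : ¬ HoldsIn Q S := fun hQ =>
  have ⟨Y, hY, hYS⟩ := hQ X hX (hS.2 Z hZ X hXZ)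
  hno Y hY (hSW (hS.1 Z hZ Y hYS))

noncomputable def lowerConeEnum (Z : Set ℕ) : ℕ → Set ℕ :=
  ((countable_setOf_turingRed Z).exists_eq_range ⟨Z, TuringRed.refl Z⟩).choose

theorem exists_lowerConeEnum_eq {X Z : Set ℕ} (h : TuringRed X Z) : ∃ k, lowerConeEnum Z k = X :=
  ((countable_setOf_turingRed Z).exists_eq_range ⟨Z, TuringRed.refl Z⟩).choose_spec.subset h

section Construction

variable (W : Set (Set ℕ)) (P : Problem)

open Classical in
noncomputable def extendBySolution (Z X : Set ℕ) : Set ℕ :=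
  if h : ∃ Y, P.Sol X Y ∧ setJoin Z Y ∈ W then setJoin Z h.choose else Z

variable {W P}

theorem extendBySolution_mem {Z : Set ℕ} (hZ : Z ∈ W) (X : Set ℕ) :
    extendBySolution W P Z X ∈ W := by
  unfold extendBySolution
  split_ifs with h
  exacts [h.choose_spec.2, hZ]

theorem turingRed_extendBySolution (Z X : Set ℕ) : TuringRed Z (extendBySolution W P Z X) := by
  unfold extendBySolution
  split_ifs
  exacts [turingRed_setJoin_left _ _, TuringRed.refl Z]

theorem exists_sol_turingRed_extendBySolution {Z X : Set ℕ}
    (h : ∃ Y, P.Sol X Y ∧ setJoin Z Y ∈ W) :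
    ∃ Y, P.Sol X Y ∧ TuringRed Y (extendBySolution W P Z X) := by
  refine ⟨h.choose, h.choose_spec.1, ?_⟩
  rw [extendBySolution, dif_pos h]
  exact turingRed_setJoin_right _ _

variable (W P)

/-- Dovetailing: stage `s + 1` serves the `s.unpair.2`-th set below stage `s.unpair.1`, so every
set below any stage is served at some later stage. -/
noncomputable def solutionChain (Z : Set ℕ) : ℕ → Set ℕ
  | 0 => Z
  | s + 1 => extendBySolution W P (solutionChain Z s)
      (lowerConeEnum (solutionChain Z s.unpair.1) s.unpair.2)
decreasing_by all_goals have := Nat.unpair_left_le s; omega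

theorem solutionChain_zero (Z : Set ℕ) : solutionChain W P Z 0 = Z := by
  rw [solutionChain]

theorem solutionChain_succ (Z : Set ℕ) (s : ℕ) :
    solutionChain W P Z (s + 1) = extendBySolution W P (solutionChain W P Z s)
      (lowerConeEnum (solutionChain W P Z s.unpair.1) s.unpair.2) := by
  rw [solutionChain]

theorem turingRed_solutionChain_succ (Z : Set ℕ) (n : ℕ) :
    TuringRed (solutionChain W P Z n) (solutionChain W P Z (n + 1)) := by
  rw [solutionChain_succ]
  exact turingRed_extendBySolution _ _

variable {W P}

theorem solutionChain_mem {Z : Set ℕ} (hZ : Z ∈ W) (n : ℕ) : solutionChain W P Z n ∈ W := by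
  induction n with
  | zero => rwa [solutionChain_zero]
  | succ n ih => rw [solutionChain_succ]; exact extendBySolution_mem ih _

theorem holdsIn_chainIdeal_solutionChain (hP : Preserves P W) {Z : Set ℕ} (hZ : Z ∈ W) :
    HoldsIn P (chainIdeal (solutionChain W P Z)) := by
  rintro X hX ⟨n, hXn⟩
  obtain ⟨k, rfl⟩ := exists_lowerConeEnum_eq hXn
  set s := Nat.pair n k
  have hXs : TuringRed (lowerConeEnum (solutionChain W P Z n) k) (solutionChain W P Z s) :=
    hXn.trans (turingRed_of_le_of_forall_succ (turingRed_solutionChain_succ W P Z)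
      (Nat.left_le_pair n k))
  obtain ⟨Y, hY, hYs⟩ := exists_sol_turingRed_extendBySolution
    (hP _ (solutionChain_mem hZ s) _ hX hXs)
  refine ⟨Y, hY, s + 1, ?_⟩
  rwa [solutionChain_succ, Nat.unpair_pair]

end Construction

/-- If a problem `P` admits preservation of a Turing-downward-closed class `W`
but `Q` does not, then there is a Turing ideal `S ⊆ W` in which `P` holds but `Q` does not. -/
theorem stmt0 (W : Set (Set ℕ)) (hW : DownwardClosed W) (P Q : Problem)
    (hP : Preserves P W) (hQ : ¬ Preserves Q W) :
    ∃ S : Set (Set ℕ), S ⊆ W ∧ TuringIdeal S ∧ HoldsIn P S ∧ ¬ HoldsIn Q S := by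
  obtain ⟨Z, hZ, X, hX, hXZ, hno⟩ :
      ∃ Z ∈ W, ∃ X ∈ Q.Inst, TuringRed X Z ∧ ∀ Y, Q.Sol X Y → setJoin Z Y ∉ W := by
    simpa [Preserves] using hQ
  have hSW := chainIdeal_subset hW (solutionChain_mem (P := P) hZ)
  have hS := turingIdeal_chainIdeal (turingRed_solutionChain_succ W P Z)
  have hZS : Z ∈ chainIdeal (solutionChain W P Z) := ⟨0, by rw [solutionChain_zero]; exact .refl Z⟩
  exact ⟨_, hSW, hS, holdsIn_chainIdeal_solutionChain hP hZ,
    not_holdsIn_of_forall_setJoin_not_mem hSW hS hZS hX hXZ hno⟩
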